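/- arXiv:2504.17063 — 2 statements merged into one kernel-verified Lean document; each statement's English description precedes it below -/
import Mathlib

section
/- Let U ⊆ ℝ^k be open and let E : U → ℝ^{ℓ×n} be a continuous matrix-valued function of constant rank r, i.e. rank E(x) = r for all x ∈ U. Then for every x ∈ U there exist a neighborhood U_x ⊆ U of x and a continuous function J : U_x → ℝ^{n×(n−r)} such that for all y ∈ U_x the column space of J(y) equals the kernel of E(y), i.e. im J(y) = ker E(y). -/
/-!
Fix `x ∈ U` and a matrix `J₀` whose columns span `ker E(x)`. The Gram-type matrix
`S(y) = E(y)ᵀ E(y) + J₀ J₀ᵀ` is invertible at `y = x`, since a vector in its kernel lies in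
`ker E(x) = im J₀` and in `ker J₀ᵀ`; by continuity of the determinant it stays invertible on a
neighborhood of `x`. There `J(y) = S(y)⁻¹ J₀` depends continuously on `y`, and its column space
is `ker E(y)`: `S(y)` maps `ker E(y)` injectively into `im J₀`, and the constant rank makes the
two dimensions agree.
-/

open Matrix Module

namespace Matrix

section Field

variable {K : Type*} [Field K] {m m' n d : Type*} [Fintype n]

theorem finrank_ker_mulVecLin (A : Matrix m n K) :
    finrank K (LinearMap.ker A.mulVecLin) = Fintype.card n - A.rank := by
  have := LinearMap.finrank_range_add_finrank_ker A.mulVecLin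
  rw [finrank_fintype_fun_eq_card] at this
  rw [rank]
  omega

theorem exists_range_mulVecLin_eq (V : Submodule K (n → K)) {k : ℕ} (hV : finrank K V = k) :
    ∃ J : Matrix n (Fin k) K, LinearMap.range J.mulVecLin = V := by
  let e : (Fin k → K) ≃ₗ[K] V := LinearEquiv.ofFinrankEq _ _ (by simp [hV])
  refine ⟨LinearMap.toMatrix' (V.subtype ∘ₗ e.toLinearMap), ?_⟩
  rw [← toLin'_apply', toLin'_toMatrix', LinearMap.range_comp_of_range_eq_top _ e.range,
    Submodule.range_subtype]

theorem ker_fromRows_mulVecLin (A : Matrix m n K) (B : Matrix m' n K) :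
    LinearMap.ker (fromRows A B).mulVecLin =
      LinearMap.ker A.mulVecLin ⊓ LinearMap.ker B.mulVecLin := by
  ext v
  simp only [LinearMap.mem_ker, Submodule.mem_inf, mulVecLin_apply, fromRows_mulVec, funext_iff,
    Sum.forall, Sum.elim_inl, Sum.elim_inr, Pi.zero_apply]

variable [Fintype d] [DecidableEq n]

theorem range_mulVecLin_inv_mul_eq_ker (E : Matrix m n K) (J : Matrix n d K)
    {S : Matrix n n K} (hS : IsUnit S)
    (hSE : ∀ v ∈ LinearMap.ker E.mulVecLin, S *ᵥ v ∈ LinearMap.range J.mulVecLin)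
    (hdim : finrank K (LinearMap.range J.mulVecLin) ≤ finrank K (LinearMap.ker E.mulVecLin)) :
    LinearMap.range (S⁻¹ * J).mulVecLin = LinearMap.ker E.mulVecLin := by
  have hSinj : Function.Injective S.mulVecLin := mulVec_injective_iff_isUnit.mpr hS
  have hmap : (LinearMap.ker E.mulVecLin).map S.mulVecLin = LinearMap.range J.mulVecLin :=
    Submodule.eq_of_le_of_finrank_le (Submodule.map_le_iff_le_comap.mpr hSE) <| by
      rwa [← (Submodule.equivMapOfInjective _ hSinj _).finrank_eq]
  rw [mulVecLin_mul, LinearMap.range_comp, ← hmap, ← Submodule.map_comp, ← mulVecLin_mul,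
    nonsing_inv_mul S ((isUnit_iff_isUnit_det S).mp hS), mulVecLin_one, Submodule.map_id]

theorem range_mulVecLin_gram_inv_mul_eq_ker [Fintype m] (E : Matrix m n K) (J : Matrix n d K)
    (hS : IsUnit (Eᵀ * E + J * Jᵀ))
    (hdim : finrank K (LinearMap.range J.mulVecLin) ≤ finrank K (LinearMap.ker E.mulVecLin)) :
    LinearMap.range ((Eᵀ * E + J * Jᵀ)⁻¹ * J).mulVecLin = LinearMap.ker E.mulVecLin := by
  refine range_mulVecLin_inv_mul_eq_ker E J hS (fun v hv => ⟨Jᵀ *ᵥ v, ?_⟩) hdim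
  have hv : E *ᵥ v = 0 := hv
  simp [add_mulVec, ← mulVec_mulVec, hv]

end Field

theorem isUnit_transpose_mul_self_add_mul_transpose {K : Type*} [Field K] [LinearOrder K]
    [IsStrictOrderedRing K] {m n d : Type*} [Fintype m] [Fintype n] [Fintype d] [DecidableEq n]
    (E : Matrix m n K) (J : Matrix n d K)
    (hJ : LinearMap.range J.mulVecLin = LinearMap.ker E.mulVecLin) :
    IsUnit (Eᵀ * E + J * Jᵀ) := by
  have hgram : Eᵀ * E + J * Jᵀ = (fromRows E Jᵀ)ᵀ * fromRows E Jᵀ := by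
    rw [transpose_fromRows, fromCols_mul_fromRows, transpose_transpose]
  rw [← mulVec_injective_iff_isUnit, ← coe_mulVecLin, ← LinearMap.ker_eq_bot, hgram,
    ker_mulVecLin_transpose_mul_self, ker_fromRows_mulVecLin, ← hJ, eq_bot_iff]
  rintro _ ⟨⟨h, rfl⟩, hJh⟩
  have hh : h ∈ LinearMap.ker (Jᵀ * J).mulVecLin := by
    simpa only [SetLike.mem_coe, LinearMap.mem_ker, mulVecLin_apply, ← mulVec_mulVec] using hJh
  rw [ker_mulVecLin_transpose_mul_self] at hh
  exact hh

end Matrix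

theorem ContinuousOn.matrix_inv {X R n : Type*} [TopologicalSpace X] [Fintype n] [DecidableEq n]
    [Field R] [TopologicalSpace R] [IsTopologicalRing R] [ContinuousInv₀ R]
    {A : X → Matrix n n R} {s : Set X} (hA : ContinuousOn A s) (hdet : ∀ x ∈ s, (A x).det ≠ 0) :
    ContinuousOn (fun x => (A x)⁻¹) s := fun x hx =>
  (continuousAt_matrix_inv _ (Ring.inverse_eq_inv' (G₀ := R) ▸ continuousAt_inv₀ (hdet x hx))
    ).comp_continuousWithinAt (hA x hx)

/-- If `E : U → ℝ^{ℓ×n}` is continuous on the open set `U ⊆ ℝ^k` and has constant rank `r`,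
then around every point of `U` there is a neighborhood on which a continuous
`J : ℝ^k → ℝ^{n×(n−r)}` exists whose column space equals `ker E(y)` pointwise. -/
theorem continuous_kernel_basis {k ℓ n r : ℕ}
    (U : Set (Fin k → ℝ)) (hU : IsOpen U)
    (E : (Fin k → ℝ) → Matrix (Fin ℓ) (Fin n) ℝ)
    (hE : ContinuousOn E U)
    (hrank : ∀ x ∈ U, (E x).rank = r) :
    ∀ x ∈ U, ∃ Ux : Set (Fin k → ℝ), IsOpen Ux ∧ x ∈ Ux ∧ Ux ⊆ U ∧
      ∃ J : (Fin k → ℝ) → Matrix (Fin n) (Fin (n - r)) ℝ,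
        ContinuousOn J Ux ∧
        ∀ y ∈ Ux, LinearMap.range (J y).mulVecLin = LinearMap.ker (E y).mulVecLin := by
  have hker : ∀ y ∈ U, finrank ℝ (LinearMap.ker (E y).mulVecLin) = n - r := fun y hy => by
    rw [finrank_ker_mulVecLin, hrank y hy, Fintype.card_fin]
  intro x hx
  obtain ⟨J₀, hJ₀⟩ := exists_range_mulVecLin_eq _ (hker x hx)
  set S := fun y => (E y)ᵀ * E y + J₀ * J₀ᵀ
  have hS : ContinuousOn S U := by fun_prop
  have hdet : ContinuousOn (fun y => (S y).det) U := by fun_prop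
  set Ux := U ∩ (fun y => (S y).det) ⁻¹' {0}ᶜ
  have hSinv : ContinuousOn (fun y => (S y)⁻¹) Ux :=
    (hS.mono Set.inter_subset_left).matrix_inv fun y hy => hy.2
  refine ⟨Ux, hdet.isOpen_inter_preimage hU isOpen_compl_singleton, ⟨hx, ?_⟩,
    Set.inter_subset_left, fun y => (S y)⁻¹ * J₀, by fun_prop, fun y hy => ?_⟩
  · exact ((isUnit_iff_isUnit_det _).mp
      (isUnit_transpose_mul_self_add_mul_transpose (E x) J₀ hJ₀)).ne_zero
  · refine range_mulVecLin_gram_inv_mul_eq_ker (E y) J₀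
      ((isUnit_iff_isUnit_det _).mpr (isUnit_iff_ne_zero.mpr hy.2)) ?_
    rw [hJ₀, hker x hx, hker y hy.1]
end

section
/- Let U ⊆ ℝ^n be open, let H : U → ℝ and d : U → ℝ^k be twice continuously differentiable, assume the Jacobian d'(x) ∈ ℝ^{k×n} has full row rank k for all x ∈ U, and that {x ∈ U : d(x) = 0} is nonempty. Define L := {(x, ∇H(x) + d'(x)ᵀλ) : x ∈ U, d(x) = 0, λ ∈ ℝ^k} ⊆ ℝ^n × ℝ^n. Then L satisfies the Lagrangian condition: for every z ∈ L and every (v₁,v₂) ∈ ℝ^n × ℝ^n, (v₁,v₂) ∈ T_z L if and only if v₁ᵀ w₂ − w₁ᵀ v₂ = 0 for all (w₁,w₂) ∈ T_z L. -/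
open Matrix

/-- The gradient of `H : ℝ^n → ℝ`, given componentwise by the partial derivatives. -/
noncomputable def grad {n : ℕ} (H : (Fin n → ℝ) → ℝ) (x : Fin n → ℝ) : Fin n → ℝ :=
  fun i => fderiv ℝ H x (Pi.single i 1)

/-- The Jacobian matrix of `d : ℝ^n → ℝ^k`. -/
noncomputable def jac {n k : ℕ} (d : (Fin n → ℝ) → (Fin k → ℝ)) (x : Fin n → ℝ) :
    Matrix (Fin k) (Fin n) ℝ :=
  Matrix.of fun j i => fderiv ℝ d x (Pi.single i 1) j

/-- The tangent space of a set `S` at `z`: all velocities at `0` of continuously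
differentiable curves `(−1,1) → S` passing through `z` at time `0`. -/
def TangentSet {V : Type*} [NormedAddCommGroup V] [NormedSpace ℝ V]
    (S : Set V) (z : V) : Set V :=
  {v | ∃ x : ℝ → V, ContDiffOn ℝ 1 x (Set.Ioo (-1 : ℝ) 1) ∧
    (∀ t ∈ Set.Ioo (-1 : ℝ) 1, x t ∈ S) ∧ x 0 = z ∧
    derivWithin x (Set.Ioo (-1 : ℝ) 1) 0 = v}

/-!
Write `z = (x₀, ∇H(x₀) + d'(x₀)ᵀλ₀)`, `D = d'(x₀)` and `K = H + λ₀ ⬝ d`. Near `z`, `L` is the image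
of `{d = 0} × ℝ^k` under `(x, λ) ↦ (x, ∇H(x) + d'(x)ᵀλ)`, and since `d' d'ᵀ` is invertible on `U`
the multiplier is recovered along any curve in `L` as the differentiable function
`λ = (d' d'ᵀ)⁻¹ d' (p - ∇H(x))`. Differentiating, and using the implicit function theorem to realize
every `u ∈ ker D` as a velocity inside `{d = 0}`, gives
`T_z L = {(u, ∇²K(x₀) u + Dᵀ μ) : D u = 0}`.
Because `∇²K(x₀)` is symmetric and `ker D ⊥ range Dᵀ`, this space is isotropic for
`ω(v, w) = v₁ ⬝ w₂ - w₁ ⬝ v₂`. It is also maximal: testing against `(0, Dᵀ μ)` puts `v₁` in `ker D`,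
and testing against `(u, ∇²K(x₀) u)` shows `v₂ - ∇²K(x₀) v₁ ⊥ ker D`, i.e.
`v₂ - ∇²K(x₀) v₁ ∈ range Dᵀ`.
-/

open Filter Topology

section LinearAlgebra

variable {m ι : Type*} [Fintype m] [Fintype ι]

/-- The model of `T_z L`, with `A = ∇²(H + λ₀ ⬝ d)(x₀)` and `D = d'(x₀)`. -/
def constrainedTangentSpace (A : (ι → ℝ) →L[ℝ] (ι → ℝ)) (D : Matrix m ι ℝ) :
    Set ((ι → ℝ) × (ι → ℝ)) :=
  {v | D *ᵥ v.1 = 0 ∧ ∃ μ, v.2 = A v.1 + Dᵀ *ᵥ μ}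

variable [DecidableEq m]

theorem Matrix.isUnit_mul_transpose_of_rank_eq {D : Matrix m ι ℝ}
    (hD : D.rank = Fintype.card m) : IsUnit (D * Dᵀ) := by
  rw [← Matrix.mulVec_surjective_iff_isUnit, ← Matrix.coe_mulVecLin, ← LinearMap.range_eq_top]
  apply Submodule.eq_top_of_finrank_eq
  rw [← Matrix.rank, Matrix.rank_self_mul_transpose, hD, Module.finrank_fintype_fun_eq_card]

theorem Matrix.exists_eq_transpose_mulVec {D : Matrix m ι ℝ} (hD : IsUnit (D * Dᵀ))
    {w : ι → ℝ} (hw : ∀ u, D *ᵥ u = 0 → u ⬝ᵥ w = 0) : ∃ μ, w = Dᵀ *ᵥ μ := by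
  refine ⟨(D * Dᵀ)⁻¹ *ᵥ (D *ᵥ w), ?_⟩
  set u := w - Dᵀ *ᵥ ((D * Dᵀ)⁻¹ *ᵥ (D *ᵥ w))
  have hu : D *ᵥ u = 0 := by
    rw [Matrix.mulVec_sub, Matrix.mulVec_mulVec, Matrix.mulVec_mulVec,
      Matrix.mul_nonsing_inv _ ((D * Dᵀ).isUnit_iff_isUnit_det.mp hD), Matrix.one_mulVec, sub_self]
  have huu : u ⬝ᵥ u = 0 := by
    calc u ⬝ᵥ u = u ⬝ᵥ w - (D *ᵥ u) ⬝ᵥ ((D * Dᵀ)⁻¹ *ᵥ (D *ᵥ w)) := by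
          rw [← Matrix.vecMul_transpose, ← Matrix.dotProduct_mulVec, ← dotProduct_sub]
      _ = 0 := by rw [hw u hu, hu, zero_dotProduct, sub_zero]
  exact sub_eq_zero.mp (dotProduct_self_eq_zero.mp huu)

theorem mem_constrainedTangentSpace_iff {A : (ι → ℝ) →L[ℝ] (ι → ℝ)}
    (hA : ∀ u w, u ⬝ᵥ A w = w ⬝ᵥ A u) {D : Matrix m ι ℝ} (hD : IsUnit (D * Dᵀ))
    (v : (ι → ℝ) × (ι → ℝ)) :
    v ∈ constrainedTangentSpace A D ↔
      ∀ w ∈ constrainedTangentSpace A D, v.1 ⬝ᵥ w.2 - w.1 ⬝ᵥ v.2 = 0 := by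
  have orth {u : ι → ℝ} (hu : D *ᵥ u = 0) (μ : m → ℝ) : u ⬝ᵥ Dᵀ *ᵥ μ = 0 := by
    rw [Matrix.dotProduct_mulVec, Matrix.vecMul_transpose, hu, zero_dotProduct]
  constructor
  · rintro ⟨hv, μ, hμ⟩ w ⟨hw, ν, hν⟩
    rw [hμ, hν, dotProduct_add, dotProduct_add, orth hv, orth hw, hA]
    ring
  · intro hperp
    have hv : D *ᵥ v.1 = 0 := by
      have := hperp (0, Dᵀ *ᵥ (D *ᵥ v.1)) ⟨Matrix.mulVec_zero D, D *ᵥ v.1, by simp⟩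
      rw [zero_dotProduct, sub_zero, Matrix.dotProduct_mulVec, Matrix.vecMul_transpose] at this
      exact dotProduct_self_eq_zero.mp this
    obtain ⟨μ, hμ⟩ : ∃ μ, v.2 - A v.1 = Dᵀ *ᵥ μ := by
      refine Matrix.exists_eq_transpose_mulVec hD fun u hu => ?_
      have := hperp (u, A u) ⟨hu, 0, by simp⟩
      rw [dotProduct_sub, hA u]
      linarith
    exact ⟨hv, μ, by rw [← hμ, add_sub_cancel]⟩

end LinearAlgebra

section TangentSet

variable {V : Type*} [NormedAddCommGroup V] [NormedSpace ℝ V] {S : Set V} {z v : V}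

/-- A `C¹` germ of a curve at `0` can be slowed down to a curve defined on all of `(-1, 1)`. -/
theorem mem_tangentSet_iff :
    v ∈ TangentSet S z ↔ ∃ γ : ℝ → V, ContDiffAt ℝ 1 γ 0 ∧ (∀ᶠ t in 𝓝 0, γ t ∈ S) ∧
      γ 0 = z ∧ HasDerivAt γ v 0 := by
  have hI : Set.Ioo (-1 : ℝ) 1 ∈ 𝓝 0 := Ioo_mem_nhds (by norm_num) (by norm_num)
  constructor
  · rintro ⟨γ, hγ, hS, h0, rfl⟩
    have hγ0 : ContDiffAt ℝ 1 γ 0 := hγ.contDiffAt hI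
    refine ⟨γ, hγ0, eventually_of_mem hI hS, h0, ?_⟩
    rw [derivWithin_of_mem_nhds hI]
    exact (hγ0.differentiableAt one_ne_zero).hasDerivAt
  · rintro ⟨γ, hγ, hS, h0, hv⟩
    obtain ⟨ε, hε, hball⟩ := Metric.eventually_nhds_iff.mp
      ((hγ.eventually (by simp)).and hS)
    set c := ε / 2
    have hc : 0 < c := by positivity
    set φ : ℝ → ℝ := fun t => c * Real.sin (t / c)
    have hφ (t : ℝ) : ContDiffAt ℝ 1 γ (φ t) ∧ γ (φ t) ∈ S := by
      refine hball ?_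
      rw [Real.dist_0_eq_abs, abs_mul, abs_of_pos hc]
      calc c * |Real.sin (t / c)| ≤ c * 1 := by gcongr; exact Real.abs_sin_le_one _
        _ < ε := by simp only [c]; linarith
    have hφ' : HasDerivAt φ 1 0 := by
      have := ((hasDerivAt_id (0 : ℝ)).div_const c).sin.const_mul c
      simpa [φ, hc.ne'] using this
    refine ⟨γ ∘ φ, fun t _ => ?_, fun t _ => (hφ t).2, by simp [φ, h0], ?_⟩
    · exact ((hφ t).1.comp t (by fun_prop)).contDiffWithinAt
    · rw [derivWithin_of_mem_nhds hI]
      have hv' : HasDerivAt γ v (φ 0) := by simpa [φ] using hv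
      simpa using (hv'.scomp 0 hφ').deriv

end TangentSet

section MatrixCalculus

variable {𝕜 X ι : Type*} [NontriviallyNormedField 𝕜] [NormedAddCommGroup X] [NormedSpace 𝕜 X]
  [Fintype ι] [DecidableEq ι] {M : X → Matrix ι ι 𝕜} {x : X}

theorem differentiableAt_matrix_det (hM : ∀ i j, DifferentiableAt 𝕜 (fun y => M y i j) x) :
    DifferentiableAt 𝕜 (fun y => (M y).det) x := by
  simp only [Matrix.det_apply']
  fun_prop

theorem differentiableAt_matrix_adjugate
    (hM : ∀ i j, DifferentiableAt 𝕜 (fun y => M y i j) x) (i j : ι) :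
    DifferentiableAt 𝕜 (fun y => (M y).adjugate i j) x := by
  simp only [Matrix.adjugate_apply]
  refine differentiableAt_matrix_det fun a b => ?_
  simp only [Matrix.updateRow_apply]
  split_ifs <;> fun_prop

theorem differentiableAt_matrix_inv (hM : ∀ i j, DifferentiableAt 𝕜 (fun y => M y i j) x)
    (hdet : (M x).det ≠ 0) (i j : ι) : DifferentiableAt 𝕜 (fun y => (M y)⁻¹ i j) x := by
  simp only [Matrix.inv_def, Ring.inverse_eq_inv', Matrix.smul_apply, smul_eq_mul]
  exact ((differentiableAt_matrix_det hM).inv hdet).mul (differentiableAt_matrix_adjugate hM i j)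

end MatrixCalculus

theorem Matrix.isInvertible_mulVecLin {m : Type*} [Fintype m] [DecidableEq m]
    {G : Matrix m m ℝ} (hG : IsUnit G) : G.mulVecLin.toContinuousLinearMap.IsInvertible := by
  have hdet := (Matrix.isUnit_iff_isUnit_det G).mp hG
  refine .of_inverse (g := G⁻¹.mulVecLin.toContinuousLinearMap) ?_ ?_ <;> ext c : 1 <;>
    simp [Matrix.mulVec_mulVec, Matrix.mul_nonsing_inv _ hdet, Matrix.nonsing_inv_mul _ hdet]

theorem HasFDerivAt.matrix_mulVec_of_eq_zero {E m ι : Type*} [NormedAddCommGroup E]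
    [NormedSpace ℝ E] [Fintype m] [Fintype ι] {A : E → Matrix m ι ℝ} {b : E → ι → ℝ}
    {b' : E →L[ℝ] ι → ℝ} {x : E} (hA : ∀ i j, DifferentiableAt ℝ (fun y => A y i j) x)
    (hb : HasFDerivAt b b' x) (hb0 : b x = 0) :
    HasFDerivAt (fun y => A y *ᵥ b y) ((A x).mulVecLin.toContinuousLinearMap ∘L b') x := by
  refine hasFDerivAt_pi'' fun i => ?_
  have hterm (j : ι) := (hA i j).hasFDerivAt.mul ((hasFDerivAt_apply j _).comp x hb)
  convert HasFDerivAt.fun_sum fun j (_ : j ∈ Finset.univ) => hterm j using 1 <;>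
    ext w <;> simp [hb0, Matrix.mulVec, dotProduct]

section GradJac

variable {n k : ℕ} {H K : (Fin n → ℝ) → ℝ} {d : (Fin n → ℝ) → Fin k → ℝ} {x : Fin n → ℝ}

theorem dotProduct_apply_single (L : (Fin n → ℝ) →L[ℝ] ℝ) (u : Fin n → ℝ) :
    u ⬝ᵥ (fun i => L (Pi.single i 1)) = L u := by
  conv_rhs => rw [pi_eq_sum_univ' u, map_sum]
  simp [dotProduct]

theorem jac_mulVec (d : (Fin n → ℝ) → Fin k → ℝ) (x u : Fin n → ℝ) :
    jac d x *ᵥ u = fderiv ℝ d x u := by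
  ext j
  simpa [Matrix.mulVec, jac, dotProduct_comm] using
    dotProduct_apply_single ((ContinuousLinearMap.proj j).comp (fderiv ℝ d x)) u

theorem contDiffAt_grad (hH : ContDiffAt ℝ 2 H x) : ContDiffAt ℝ 1 (grad H) x := by
  rw [contDiffAt_pi]
  exact fun i => (hH.fderiv_right le_rfl).clm_apply contDiffAt_const

theorem contDiffAt_jac_apply (hd : ContDiffAt ℝ 2 d x) (j : Fin k) (i : Fin n) :
    ContDiffAt ℝ 1 (fun y => jac d y j i) x :=
  contDiffAt_pi.mp ((hd.fderiv_right le_rfl).clm_apply contDiffAt_const) j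

theorem fderiv_grad_apply (hK : ContDiffAt ℝ 2 K x) (w : Fin n → ℝ) :
    fderiv ℝ (grad K) x w = fun i => fderiv ℝ (fderiv ℝ K) x w (Pi.single i 1) := by
  have hK' : DifferentiableAt ℝ (fderiv ℝ K) x :=
    (hK.fderiv_right le_rfl).differentiableAt one_ne_zero
  have hcoord (i : Fin n) : DifferentiableAt ℝ (fun y => fderiv ℝ K y (Pi.single i 1)) x :=
    hK'.clm_apply (differentiableAt_const _)
  rw [show grad K = fun y i => fderiv ℝ K y (Pi.single i 1) from rfl, fderiv_pi hcoord]
  ext i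
  simp [fderiv_clm_apply hK' (differentiableAt_const _)]

theorem dotProduct_fderiv_grad_comm (hK : ContDiffAt ℝ 2 K x) (u w : Fin n → ℝ) :
    u ⬝ᵥ fderiv ℝ (grad K) x w = w ⬝ᵥ fderiv ℝ (grad K) x u := by
  rw [fderiv_grad_apply hK, fderiv_grad_apply hK, dotProduct_apply_single,
    dotProduct_apply_single]
  exact hK.isSymmSndFDerivAt (by simp) w u

theorem grad_add_dotProduct (hH : DifferentiableAt ℝ H x) (hd : DifferentiableAt ℝ d x)
    (lam : Fin k → ℝ) :
    grad (fun y => H y + lam ⬝ᵥ d y) x = grad H x + (jac d x)ᵀ *ᵥ lam := by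
  have hdot : HasFDerivAt (fun y => lam ⬝ᵥ d y)
      (∑ j, lam j • (ContinuousLinearMap.proj j).comp (fderiv ℝ d x)) x := by
    simp only [dotProduct]
    exact HasFDerivAt.fun_sum fun j _ =>
      ((hasFDerivAt_apply j _).comp x hd.hasFDerivAt).const_mul (lam j)
  ext i
  simp only [grad, Pi.add_apply]
  rw [(hH.hasFDerivAt.fun_add hdot).fderiv]
  simp [Matrix.mulVec, dotProduct, jac, mul_comm]

theorem contDiffAt_add_dotProduct (hH : ContDiffAt ℝ 2 H x) (hd : ContDiffAt ℝ 2 d x)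
    (lam : Fin k → ℝ) : ContDiffAt ℝ 2 (fun y => H y + lam ⬝ᵥ d y) x := by
  have hdj (j : Fin k) : ContDiffAt ℝ 2 (fun y => d y j) x := contDiffAt_pi.mp hd j
  simp only [dotProduct]
  fun_prop

end GradJac

section Momentum

variable {n k : ℕ} {H : (Fin n → ℝ) → ℝ} {d : (Fin n → ℝ) → Fin k → ℝ} {x : Fin n → ℝ}

noncomputable def lagrangeMomentum (H : (Fin n → ℝ) → ℝ) (d : (Fin n → ℝ) → Fin k → ℝ)
    (q : (Fin n → ℝ) × (Fin k → ℝ)) : Fin n → ℝ :=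
  grad H q.1 + (jac d q.1)ᵀ *ᵥ q.2

noncomputable def lagrangeMultiplier (H : (Fin n → ℝ) → ℝ) (d : (Fin n → ℝ) → Fin k → ℝ)
    (q : (Fin n → ℝ) × (Fin n → ℝ)) : Fin k → ℝ :=
  (jac d q.1 * (jac d q.1)ᵀ)⁻¹ *ᵥ (jac d q.1 *ᵥ (q.2 - grad H q.1))

theorem lagrangeMultiplier_lagrangeMomentum (hx : IsUnit (jac d x * (jac d x)ᵀ))
    (lam : Fin k → ℝ) : lagrangeMultiplier H d (x, lagrangeMomentum H d (x, lam)) = lam := by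
  rw [lagrangeMultiplier, lagrangeMomentum, add_sub_cancel_left, Matrix.mulVec_mulVec,
    Matrix.mulVec_mulVec, Matrix.mul_assoc, Matrix.nonsing_inv_mul _
      ((Matrix.isUnit_iff_isUnit_det _).mp hx), Matrix.one_mulVec]

theorem contDiffAt_lagrangeMomentum (hH : ContDiffAt ℝ 2 H x) (hd : ContDiffAt ℝ 2 d x)
    (lam : Fin k → ℝ) : ContDiffAt ℝ 1 (lagrangeMomentum H d) (x, lam) := by
  have hgrad (i : Fin n) := (contDiffAt_pi.mp (contDiffAt_grad hH) i).fst' (y := lam)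
  have hjac (j : Fin k) (i : Fin n) := (contDiffAt_jac_apply hd j i).fst' (y := lam)
  rw [contDiffAt_pi]
  intro i
  simp only [lagrangeMomentum, Pi.add_apply, Matrix.mulVec, dotProduct, Matrix.transpose_apply]
  fun_prop

theorem differentiableAt_lagrangeMultiplier (hH : ContDiffAt ℝ 2 H x)
    (hd : ContDiffAt ℝ 2 d x) (hx : IsUnit (jac d x * (jac d x)ᵀ)) (p : Fin n → ℝ) :
    DifferentiableAt ℝ (lagrangeMultiplier H d) (x, p) := by
  have hgrad (i : Fin n) :=
    ((contDiffAt_pi.mp (contDiffAt_grad hH) i).fst' (y := p)).differentiableAt one_ne_zero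
  have hjac (j : Fin k) (i : Fin n) :=
    ((contDiffAt_jac_apply hd j i).fst' (y := p)).differentiableAt one_ne_zero
  have hinv (a b : Fin k) : DifferentiableAt ℝ
      (fun q : (Fin n → ℝ) × (Fin n → ℝ) => (jac d q.1 * (jac d q.1)ᵀ)⁻¹ a b) (x, p) := by
    refine differentiableAt_matrix_inv (M := fun q : (Fin n → ℝ) × (Fin n → ℝ) =>
      jac d q.1 * (jac d q.1)ᵀ) (fun a b => ?_) ((Matrix.isUnit_iff_isUnit_det _).mp hx).ne_zero a b
    simp only [Matrix.mul_apply, Matrix.transpose_apply]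
    fun_prop
  rw [differentiableAt_pi]
  intro j
  simp only [lagrangeMultiplier, Matrix.mulVec, dotProduct, Pi.sub_apply]
  exact DifferentiableAt.fun_sum fun b _ => (hinv j b).mul <| DifferentiableAt.fun_sum
    fun i _ => (hjac b i).mul <|
      (by fun_prop : DifferentiableAt ℝ (fun q => q.2 i) _).fun_sub (hgrad i)

theorem hasFDerivAt_lagrangeMomentum (hH : ContDiffAt ℝ 2 H x) (hd : ContDiffAt ℝ 2 d x)
    (lam : Fin k → ℝ) :
    HasFDerivAt (lagrangeMomentum H d)
      ((fderiv ℝ (grad fun y => H y + lam ⬝ᵥ d y) x).coprod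
        (jac d x)ᵀ.mulVecLin.toContinuousLinearMap) (x, lam) := by
  set K := fun y => H y + lam ⬝ᵥ d y
  have hK : ContDiffAt ℝ 2 K x := contDiffAt_add_dotProduct hH hd lam
  have hgradK : HasFDerivAt (fun q : (Fin n → ℝ) × (Fin k → ℝ) => grad K q.1)
      (fderiv ℝ (grad K) x ∘L .fst ℝ (Fin n → ℝ) (Fin k → ℝ)) (x, lam) :=
    HasFDerivAt.comp (g := grad K) (x, lam)
      ((contDiffAt_grad hK).differentiableAt one_ne_zero).hasFDerivAt hasFDerivAt_fst
  have hjac (j : Fin k) (i : Fin n) :=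
    ((contDiffAt_jac_apply hd j i).fst' (y := lam)).differentiableAt one_ne_zero
  have hjacT : HasFDerivAt (fun q : (Fin n → ℝ) × (Fin k → ℝ) => (jac d q.1)ᵀ *ᵥ (q.2 - lam))
      ((jac d x)ᵀ.mulVecLin.toContinuousLinearMap ∘L .snd ℝ (Fin n → ℝ) (Fin k → ℝ)) (x, lam) := by
    have hb : HasFDerivAt (fun q : (Fin n → ℝ) × (Fin k → ℝ) => q.2 - lam)
        (.snd ℝ (Fin n → ℝ) (Fin k → ℝ)) (x, lam) :=
      hasFDerivAt_snd.sub_const lam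
    have := HasFDerivAt.matrix_mulVec_of_eq_zero (A := fun q : (Fin n → ℝ) × (Fin k → ℝ) =>
      (jac d q.1)ᵀ) (fun i j => hjac j i) hb (sub_self lam)
    exact this
  have hshift : (fun q : (Fin n → ℝ) × (Fin k → ℝ) => grad K q.1 + (jac d q.1)ᵀ *ᵥ (q.2 - lam))
      =ᶠ[𝓝 (x, lam)] lagrangeMomentum H d := by
    filter_upwards [((hH.eventually (by simp)).and (hd.eventually (by simp))).prod_inl_nhds lam]
      with q ⟨hHq, hdq⟩
    rw [lagrangeMomentum, grad_add_dotProduct (hHq.differentiableAt two_ne_zero)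
      (hdq.differentiableAt two_ne_zero), Matrix.mulVec_sub]
    abel
  exact (hgradK.add hjacT).congr_of_eventuallyEq hshift.symm

end Momentum

section Curves

variable {n k : ℕ} {d : (Fin n → ℝ) → Fin k → ℝ} {x₀ u : Fin n → ℝ}

theorem jac_mulVec_eq_zero_of_eventually_eq_zero (hd : DifferentiableAt ℝ d x₀)
    {y : ℝ → Fin n → ℝ} (hy : HasDerivAt y u 0) (hy₀ : y 0 = x₀)
    (hzero : ∀ᶠ t in 𝓝 0, d (y t) = 0) : jac d x₀ *ᵥ u = 0 := by
  rw [jac_mulVec]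
  exact (hd.hasFDerivAt.comp_hasDerivAt_of_eq 0 hy hy₀.symm).unique
    ((hasDerivAt_const 0 0).congr_of_eventuallyEq hzero)

/-- The implicit function theorem, applied to `(s, c) ↦ d (x₀ + s • u + d'(x₀)ᵀ c)`, gives a curve
in `{d = 0}` with prescribed velocity `u ∈ ker d'(x₀)`. -/
theorem exists_curve_of_jac_mulVec_eq_zero (hd : ContDiffAt ℝ 1 d x₀) (hdx₀ : d x₀ = 0)
    (hG : IsUnit (jac d x₀ * (jac d x₀)ᵀ)) (hu : jac d x₀ *ᵥ u = 0) :
    ∃ y : ℝ → Fin n → ℝ, ContDiffAt ℝ 1 y 0 ∧ y 0 = x₀ ∧ HasDerivAt y u 0 ∧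
      ∀ᶠ t in 𝓝 0, d (y t) = 0 := by
  set D := jac d x₀
  set L : ℝ × (Fin k → ℝ) →L[ℝ] Fin n → ℝ := (ContinuousLinearMap.fst ℝ ℝ (Fin k → ℝ)).smulRight u
    + Dᵀ.mulVecLin.toContinuousLinearMap ∘L .snd ℝ ℝ (Fin k → ℝ)
  set g : ℝ × (Fin k → ℝ) → Fin n → ℝ := fun q => x₀ + L q
  have hg (q) : HasFDerivAt g L q := L.hasFDerivAt.const_add x₀
  have hg0 : g 0 = x₀ := by simp [g]
  have hf : ContDiffAt ℝ 1 (d ∘ g) 0 := (hg0 ▸ hd).comp 0 (by fun_prop)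
  have hf' : fderiv ℝ (d ∘ g) 0 ∘L .inr ℝ ℝ (Fin k → ℝ) =
      (D * Dᵀ).mulVecLin.toContinuousLinearMap := by
    have hd' : HasFDerivAt d (fderiv ℝ d x₀) (g 0) :=
      hg0 ▸ (hd.differentiableAt one_ne_zero).hasFDerivAt
    rw [(hd'.comp 0 (hg 0)).fderiv]
    ext c : 1
    simp [L, ← jac_mulVec, D]
  have hinv : (fderiv ℝ (d ∘ g) 0 ∘L .inr ℝ ℝ (Fin k → ℝ)).IsInvertible :=
    hf' ▸ Matrix.isInvertible_mulVecLin hG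
  set ψ := hf.implicitFunction one_ne_zero hinv
  have hψ0 : ψ 0 = 0 := hf.implicitFunction_apply_self one_ne_zero hinv
  have hψ : ContDiffAt ℝ 1 ψ 0 := hf.contDiffAt_implicitFunction one_ne_zero hinv
  have hy : HasDerivAt (fun s => g (s, ψ s)) (u + Dᵀ *ᵥ deriv ψ 0) 0 := by
    have := (hg _).comp_hasDerivAt 0
      ((hasDerivAt_id 0).prodMk ((hψ.differentiableAt one_ne_zero).hasDerivAt))
    rwa [show L (1, deriv ψ 0) = u + Dᵀ *ᵥ deriv ψ 0 by simp [L, Matrix.mulVec_transpose]]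
      at this
  have hy0 : g (0, ψ 0) = x₀ := by rw [hψ0]; exact hg0
  have hzero : ∀ᶠ s in 𝓝 0, d (g (s, ψ s)) = 0 := by
    filter_upwards [hf.eventually_apply_implicitFunction one_ne_zero hinv] with s hs
    rwa [Function.comp_apply, Function.comp_apply, hg0, hdx₀] at hs
  have hψ' : deriv ψ 0 = 0 := by
    have h :=
      jac_mulVec_eq_zero_of_eventually_eq_zero (hd.differentiableAt one_ne_zero) hy hy0 hzero
    rw [Matrix.mulVec_add, hu, zero_add, Matrix.mulVec_mulVec, ← Matrix.mulVec_zero (D * Dᵀ)] at h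
    exact Matrix.mulVec_injective_iff_isUnit.mpr hG h
  refine ⟨fun s => g (s, ψ s), by fun_prop, hy0, by simpa [hψ'] using hy, hzero⟩

end Curves

section ConstrainedLagrangian

variable {n k : ℕ} {U : Set (Fin n → ℝ)} {H : (Fin n → ℝ) → ℝ} {d : (Fin n → ℝ) → Fin k → ℝ}
  {x₀ : Fin n → ℝ}

def constrainedLagrangian (U : Set (Fin n → ℝ)) (H : (Fin n → ℝ) → ℝ)
    (d : (Fin n → ℝ) → Fin k → ℝ) : Set ((Fin n → ℝ) × (Fin n → ℝ)) :=
  {p | ∃ x lam, x ∈ U ∧ d x = 0 ∧ p = (x, lagrangeMomentum H d (x, lam))}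

theorem mem_constrainedTangentSpace_of_mem_tangentSet
    (hG : ∀ x ∈ U, IsUnit (jac d x * (jac d x)ᵀ)) (hH : ContDiffAt ℝ 2 H x₀)
    (hd : ContDiffAt ℝ 2 d x₀) (lam₀ : Fin k → ℝ) {v : (Fin n → ℝ) × (Fin n → ℝ)}
    (hv : v ∈ TangentSet (constrainedLagrangian U H d) (x₀, lagrangeMomentum H d (x₀, lam₀))) :
    v ∈ constrainedTangentSpace (fderiv ℝ (grad fun y => H y + lam₀ ⬝ᵥ d y) x₀) (jac d x₀) := by
  obtain ⟨γ, hγ, hγL, hγ0, hγv⟩ := mem_tangentSet_iff.mp hv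
  set lam : ℝ → Fin k → ℝ := fun t => lagrangeMultiplier H d (γ t)
  have hγL' : ∀ᶠ t in 𝓝 0, (γ t).1 ∈ U ∧ d (γ t).1 = 0 ∧
      (γ t).2 = lagrangeMomentum H d ((γ t).1, lam t) := by
    filter_upwards [hγL] with t ⟨x, μ, hx, hdx, hγt⟩
    simp only [lam, hγt, lagrangeMultiplier_lagrangeMomentum (hG x hx), and_true]
    exact ⟨hx, hdx⟩
  have hx₀ : x₀ ∈ U := by simpa [hγ0] using hγL'.self_of_nhds.1
  have hlam0 : lam 0 = lam₀ := by
    simp only [lam, hγ0, lagrangeMultiplier_lagrangeMomentum (hG x₀ hx₀)]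
  have hlam : HasDerivAt lam (deriv lam 0) 0 := by
    refine (DifferentiableAt.comp (g := lagrangeMultiplier H d) 0 ?_
      hγv.differentiableAt).hasDerivAt
    rw [hγ0]
    exact differentiableAt_lagrangeMultiplier hH hd (hG x₀ hx₀) _
  have hx : HasDerivAt (fun t => (γ t).1) v.1 0 := hγv.fst
  have hp : HasDerivAt (fun t => (γ t).2) v.2 0 := hγv.snd
  refine ⟨jac_mulVec_eq_zero_of_eventually_eq_zero (hd.differentiableAt two_ne_zero) hx
    (by rw [hγ0]) (hγL'.mono fun t ht => ht.2.1), deriv lam 0, ?_⟩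
  have hp' := (hasFDerivAt_lagrangeMomentum hH hd lam₀).comp_hasDerivAt_of_eq 0 (hx.prodMk hlam)
    (by rw [hγ0, hlam0])
  refine hp.unique (hp'.congr_of_eventuallyEq ?_)
  filter_upwards [hγL'] with t ht using ht.2.2

theorem mem_tangentSet_of_mem_constrainedTangentSpace (hU : U ∈ 𝓝 x₀) (hdx₀ : d x₀ = 0)
    (hH : ContDiffAt ℝ 2 H x₀) (hd : ContDiffAt ℝ 2 d x₀) (hG : IsUnit (jac d x₀ * (jac d x₀)ᵀ))
    (lam₀ : Fin k → ℝ) {v : (Fin n → ℝ) × (Fin n → ℝ)}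
    (hv : v ∈ constrainedTangentSpace (fderiv ℝ (grad fun y => H y + lam₀ ⬝ᵥ d y) x₀) (jac d x₀)) :
    v ∈ TangentSet (constrainedLagrangian U H d) (x₀, lagrangeMomentum H d (x₀, lam₀)) := by
  obtain ⟨hv1, μ, hv2⟩ := hv
  obtain ⟨y, hy, hy0, hyv, hyd⟩ :=
    exists_curve_of_jac_mulVec_eq_zero (hd.of_le one_le_two) hdx₀ hG hv1
  have hq0 : (y 0, lam₀ + (0 : ℝ) • μ) = (x₀, lam₀) := by simp [hy0]
  have hq : HasDerivAt (fun t => (y t, lam₀ + t • μ)) (v.1, μ) 0 :=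
    hyv.prodMk (by simpa using ((hasDerivAt_id (0 : ℝ)).smul_const μ).const_add lam₀)
  rw [mem_tangentSet_iff]
  refine ⟨fun t => (y t, lagrangeMomentum H d (y t, lam₀ + t • μ)), hy.prodMk ?_, ?_, ?_, ?_⟩
  · refine ContDiffAt.comp (g := lagrangeMomentum H d) 0 ?_ (by fun_prop)
    rw [hq0]
    exact contDiffAt_lagrangeMomentum hH hd lam₀
  · filter_upwards [hyd, hy.continuousAt.preimage_mem_nhds (hy0 ▸ hU)] with t hdt hUt
    exact ⟨y t, lam₀ + t • μ, hUt, hdt, rfl⟩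
  · simp [hy0]
  · have := (hasFDerivAt_lagrangeMomentum hH hd lam₀).comp_hasDerivAt_of_eq 0 hq hq0.symm
    simp only [ContinuousLinearMap.coprod_apply, LinearMap.coe_toContinuousLinearMap',
      Matrix.mulVecLin_apply, ← hv2] at this
    exact hyv.prodMk this

theorem tangentSet_constrainedLagrangian (hU : IsOpen U) (hH : ContDiffOn ℝ 2 H U)
    (hd : ContDiffOn ℝ 2 d U) (hG : ∀ x ∈ U, IsUnit (jac d x * (jac d x)ᵀ)) (hx₀ : x₀ ∈ U)
    (hdx₀ : d x₀ = 0) (lam₀ : Fin k → ℝ) :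
    TangentSet (constrainedLagrangian U H d) (x₀, lagrangeMomentum H d (x₀, lam₀)) =
      constrainedTangentSpace (fderiv ℝ (grad fun y => H y + lam₀ ⬝ᵥ d y) x₀) (jac d x₀) := by
  have hU₀ := hU.mem_nhds hx₀
  have hH₀ := hH.contDiffAt hU₀
  have hd₀ := hd.contDiffAt hU₀
  exact Set.Subset.antisymm
    (fun _ => mem_constrainedTangentSpace_of_mem_tangentSet hG hH₀ hd₀ lam₀)
    (fun _ => mem_tangentSet_of_mem_constrainedTangentSpace hU₀ hdx₀ hH₀ hd₀ (hG x₀ hx₀) lam₀)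

end ConstrainedLagrangian

theorem constrained_lagrangian_submanifold_general {n k : ℕ}
    (U : Set (Fin n → ℝ)) (hU : IsOpen U)
    (H : (Fin n → ℝ) → ℝ) (d : (Fin n → ℝ) → (Fin k → ℝ))
    (hH : ContDiffOn ℝ 2 H U) (hd : ContDiffOn ℝ 2 d U)
    (hrank : ∀ x ∈ U, (jac d x).rank = k)
    (L : Set ((Fin n → ℝ) × (Fin n → ℝ)))
    (hL : L = {p | ∃ (x : Fin n → ℝ) (lam : Fin k → ℝ),
      x ∈ U ∧ d x = 0 ∧ p = (x, grad H x + (jac d x)ᵀ *ᵥ lam)}) :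
    ∀ z ∈ L, ∀ v : (Fin n → ℝ) × (Fin n → ℝ),
      v ∈ TangentSet L z ↔
        ∀ w ∈ TangentSet L z, v.1 ⬝ᵥ w.2 - w.1 ⬝ᵥ v.2 = 0 := by
  obtain rfl : L = constrainedLagrangian U H d := hL
  have hG (x) (hx : x ∈ U) : IsUnit (jac d x * (jac d x)ᵀ) :=
    Matrix.isUnit_mul_transpose_of_rank_eq (by rw [hrank x hx, Fintype.card_fin])
  rintro _ ⟨x₀, lam₀, hx₀, hdx₀, rfl⟩ v
  have hU₀ := hU.mem_nhds hx₀
  have hHess := dotProduct_fderiv_grad_comm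
    (contDiffAt_add_dotProduct (hH.contDiffAt hU₀) (hd.contDiffAt hU₀) lam₀)
  rw [tangentSet_constrainedLagrangian hU hH hd hG hx₀ hdx₀]
  exact mem_constrainedTangentSpace_iff hHess (hG x₀ hx₀) v

/-- The constrained set `L = {(x, ∇H(x) + d'(x)ᵀλ) : x ∈ U, d(x) = 0, λ ∈ ℝ^k}` is a
Lagrangian submanifold of `ℝ^n × ℝ^n`: a vector lies in the tangent space `T_z L` if and
only if it is symplectically orthogonal to all of `T_z L`. -/
theorem constrained_lagrangian_submanifold {n k : ℕ}
    (U : Set (Fin n → ℝ)) (hU : IsOpen U)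
    (H : (Fin n → ℝ) → ℝ) (d : (Fin n → ℝ) → (Fin k → ℝ))
    (hH : ContDiffOn ℝ 2 H U) (hd : ContDiffOn ℝ 2 d U)
    (hrank : ∀ x ∈ U, (jac d x).rank = k)
    (hne : ∃ x ∈ U, d x = 0)
    (L : Set ((Fin n → ℝ) × (Fin n → ℝ)))
    (hL : L = {p | ∃ (x : Fin n → ℝ) (lam : Fin k → ℝ),
      x ∈ U ∧ d x = 0 ∧ p = (x, grad H x + (jac d x)ᵀ *ᵥ lam)}) :
    ∀ z ∈ L, ∀ v : (Fin n → ℝ) × (Fin n → ℝ),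
      v ∈ TangentSet L z ↔
        ∀ w ∈ TangentSet L z, v.1 ⬝ᵥ w.2 - w.1 ⬝ᵥ v.2 = 0 :=
  constrained_lagrangian_submanifold_general U hU H d hH hd hrank L hL
end
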